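/- Set Y0 = (m−1)/2 and X(P2) = (m−1)/(2α(mN−N+2)). Then: (i) β/α < Y0, i.e. −Y0 < −β/α; and (ii) for all real numbers Y < −Y0, X ∈ [0, X(P2)] and Z ≥ 0, one has −Y² − (β/α)Y + X(1 − NY) − Z < 0. In particular, the half-space {Y < −(m−1)/2} is positively invariant for the system (PSsyst1) in the region {0 ≤ X ≤ X(P2), Z ≥ 0}. -/

import Mathlib

open Real Filter Set Topology

noncomputable def alphaC (m p σ : ℝ) : ℝ := (σ + 2) / (σ * (m - 1) + 2 * (p - 1))

noncomputable def betaC (m p σ : ℝ) : ℝ := (m - p) / (σ * (m - 1) + 2 * (p - 1))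

/-! With `Y₀ = (m - 1)/2`, the identity `α (m - 1) = 2β + 1` gives `β/α = Y₀ - 1/(2α)`,
so part (i) is `α > 0`. For (ii), write the left-hand side as `-Y² - cY + X - Z` with
`c = β/α + N X`. The bound `X ≤ X(P2)` makes its value at `Y = -Y₀` nonpositive and forces
`c ≤ Y₀`, so `-Y₀` lies left of the vertex `-c/2` of this downward parabola, which is therefore
strictly increasing on `(-∞, -Y₀]`. -/

lemma neg_sq_sub_mul_lt_of_lt_neg {c Y₀ Y : ℝ} (hc : c ≤ 2 * Y₀) (hY : Y < -Y₀) :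
    -Y ^ 2 - c * Y < -Y₀ ^ 2 + c * Y₀ := by
  have hfactor : -Y ^ 2 - c * Y - (-Y₀ ^ 2 + c * Y₀) = (Y + Y₀) * (Y₀ - Y - c) := by ring
  have hneg : (Y + Y₀) * (Y₀ - Y - c) < 0 := mul_neg_of_neg_of_pos (by linarith) (by linarith)
  linarith

theorem neg_sq_sub_mul_add_mul_sub_neg {k Y₀ n X Y Z : ℝ} (hY₀ : 0 < Y₀) (hX₀ : 0 ≤ X)
    (hX : X * (1 + n * Y₀) ≤ Y₀ * k) (hY : Y < -Y₀) (hZ : 0 ≤ Z) :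
    -Y ^ 2 - (Y₀ - k) * Y + X * (1 - n * Y) - Z < 0 := by
  have hnX : n * X ≤ k := by nlinarith
  have hvertex := neg_sq_sub_mul_lt_of_lt_neg (c := Y₀ - k + n * X) (by linarith) hY
  have hroot : -Y₀ ^ 2 + (Y₀ - k + n * X) * Y₀ + X ≤ 0 := by linarith
  linarith

section Parameters

variable {m p σ : ℝ}

lemma exponent_denom_pos (hm : 1 < m) (hσ : 2 * (1 - p) / (m - 1) < σ) :
    0 < σ * (m - 1) + 2 * (p - 1) := by
  have := (div_lt_iff₀ (sub_pos.2 hm)).1 hσ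
  linarith

lemma alphaC_pos (hm : 1 < m) (hp1 : p < 1) (hσ : 2 * (1 - p) / (m - 1) < σ) :
    0 < alphaC m p σ := by
  have hσ₀ : 0 < σ := (div_pos (by linarith) (by linarith)).trans hσ
  exact div_pos (by linarith) (exponent_denom_pos hm hσ)

lemma alphaC_mul_sub_one (hL : σ * (m - 1) + 2 * (p - 1) ≠ 0) :
    alphaC m p σ * (m - 1) = 2 * betaC m p σ + 1 := by
  unfold alphaC betaC
  field_simp
  ring

lemma betaC_div_alphaC (hL : σ * (m - 1) + 2 * (p - 1) ≠ 0) (hα : alphaC m p σ ≠ 0) :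
    betaC m p σ / alphaC m p σ = (m - 1) / 2 - 1 / (2 * alphaC m p σ) := by
  have := alphaC_mul_sub_one hL
  field_simp
  linarith

end Parameters

theorem plane_of_no_return_general (m p σ : ℝ) (N : ℕ) (hm : 1 < m) (hp1 : p < 1)
    (hσ : 2 * (1 - p) / (m - 1) < σ) :
    betaC m p σ / alphaC m p σ < (m - 1) / 2 ∧
    (∀ X Y Z : ℝ, Y < -((m - 1) / 2) → 0 ≤ X →
      X ≤ (m - 1) / (2 * alphaC m p σ * (m * (N : ℝ) - (N : ℝ) + 2)) → 0 ≤ Z →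
      -Y ^ 2 - betaC m p σ / alphaC m p σ * Y + X * (1 - (N : ℝ) * Y) - Z < 0) := by
  have hα := alphaC_pos hm hp1 hσ
  rw [betaC_div_alphaC (exponent_denom_pos hm hσ).ne' hα.ne']
  refine ⟨by linarith [one_div_pos.2 (mul_pos two_pos hα)], fun X Y Z hY hX₀ hX hZ => ?_⟩
  have hY₀ : 0 < (m - 1) / 2 := by linarith
  refine neg_sq_sub_mul_add_mul_sub_neg hY₀ hX₀ ?_ hY hZ
  have hXP2 : (m - 1) / (2 * alphaC m p σ * (m * N - N + 2))
      = (m - 1) / 2 * (1 / (2 * alphaC m p σ)) / (1 + N * ((m - 1) / 2)) := by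
    field_simp
    ring
  rwa [hXP2, le_div_iff₀ (by positivity)] at hX

theorem plane_of_no_return (m p σ : ℝ) (N : ℕ) (hm : 1 < m) (hp0 : 0 < p) (hp1 : p < 1)
    (hσ : 2 * (1 - p) / (m - 1) < σ) (hN : 1 ≤ N) :
    betaC m p σ / alphaC m p σ < (m - 1) / 2 ∧
    (∀ X Y Z : ℝ, Y < -((m - 1) / 2) → 0 ≤ X →
      X ≤ (m - 1) / (2 * alphaC m p σ * (m * (N : ℝ) - (N : ℝ) + 2)) → 0 ≤ Z →
      -Y ^ 2 - betaC m p σ / alphaC m p σ * Y + X * (1 - (N : ℝ) * Y) - Z < 0) :=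
  plane_of_no_return_general m p σ N hm hp1 hσ
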